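/- Every term of the combinatory logic fragment generated by B alone (a B-term) is βη-equivalent, as a lambda term, to a term of the form λx1.…λxk. M where k ≥ 3 and M is some parenthesization (binary tree) of the sequence x1 x2 … xk; in particular each bound variable occurs exactly once in M, in the order introduced. -/
import Mathlib


/-- Untyped lambda terms in de Bruijn representation. -/
inductive Lam where
  | var : Nat → Lam
  | app : Lam → Lam → Lam
  | lam : Lam → Lam
deriving DecidableEq

namespace Lam

/-- Lift (shift by one) all free variables with index ≥ `c`. -/
def lift (c : Nat) : Lam → Lam
  | var n => if n < c then var n else var (n + 1)
  | app a b => app (lift c a) (lift c b)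
  | lam a => lam (lift (c + 1) a)

/-- Substitute `s` for the free variable with index `d`. -/
def subst (d : Nat) (s : Lam) : Lam → Lam
  | var n => if n = d then s else if d < n then var (n - 1) else var n
  | app a b => app (subst d s a) (subst d s b)
  | lam a => lam (subst (d + 1) (lift 0 s) a)

/-- One-step βη-reduction (compatible closure of β and η). -/
inductive Step : Lam → Lam → Prop
  | beta (a b : Lam) : Step (app (lam a) b) (subst 0 b a)
  | eta (a : Lam) : Step (lam (app (lift 0 a) (var 0))) a
  | appL {a a' : Lam} (b : Lam) : Step a a' → Step (app a b) (app a' b)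
  | appR (a : Lam) {b b' : Lam} : Step b b' → Step (app a b) (app a b')
  | xi {a a' : Lam} : Step a a' → Step (lam a) (lam a')

/-- βη-equivalence: the equivalence relation generated by one-step βη-reduction. -/
def BetaEtaEq (a b : Lam) : Prop := Relation.EqvGen Step a b

/-- The B combinator λf.λg.λx. f (g x). -/
def B : Lam := lam (lam (lam (app (var 2) (app (var 1) (var 0)))))

/-- `flat X n` is the (n+1)-fold flat left application, i.e. `X_(n+1)`:
`flat X 0 = X = X_(1)` and `flat X (n+1) = (flat X n) X = X_(n+2)`. -/
def flat (X : Lam) : Nat → Lam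
  | 0 => X
  | n + 1 => app (flat X n) X

end Lam

open Lam

/-- B-terms: applicative combinations of the single combinator B. -/
inductive IsBTerm : Lam → Prop
  | base : IsBTerm B
  | app {a b : Lam} : IsBTerm a → IsBTerm b → IsBTerm (app a b)

/-- Unlabeled binary trees: parenthesizations of a sequence of variables. -/
inductive BTree where
  | leaf : BTree
  | node : BTree → BTree → BTree

/-- Number of leaves of a binary tree. -/
def BTree.size : BTree → ℕ
  | .leaf => 1
  | .node l r => l.size + r.size

/-- k-fold lambda abstraction. -/
def lams : ℕ → Lam → Lam
  | 0, t => t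
  | k + 1, t => lam (lams k t)

/-- Under k lambdas, the term obtained from a tree by labeling its leaves,
left to right starting at position i, with the variables x_{i+1}, x_{i+2}, …
(so leaf at position i is de Bruijn variable k - 1 - i). -/
def BTree.toLam (k : ℕ) : ℕ → BTree → Lam
  | i, .leaf => var (k - 1 - i)
  | i, .node l r => app (BTree.toLam k i l) (BTree.toLam k (i + l.size) r)

/-! ### Auxiliary development -/

instance : Inhabited Lam := ⟨Lam.var 0⟩

@[simp] lemma BTree.size_leaf : BTree.size .leaf = 1 := rfl
@[simp] lemma BTree.size_node (a b : BTree) : (BTree.node a b).size = a.size + b.size := rfl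

namespace Lam

def liftN : ℕ → Lam → Lam
  | 0, t => t
  | j+1, t => lift 0 (liftN j t)

def cu : ℕ → Lam → Prop
  | c, var n => n < c
  | c, app a b => cu c a ∧ cu c b
  | c, lam a => cu (c+1) a

def apps : Lam → List Lam → Lam := List.foldl app

lemma apps_nil (h : Lam) : apps h [] = h := rfl
lemma apps_cons (h A : Lam) (R : List Lam) : apps h (A :: R) = apps (app h A) R := rfl
lemma apps_append (h : Lam) (l1 l2 : List Lam) : apps h (l1 ++ l2) = apps (apps h l1) l2 :=
  List.foldl_append ..

lemma subst_apps (d : ℕ) (s h : Lam) (l : List Lam) :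
    subst d s (apps h l) = apps (subst d s h) (l.map (subst d s)) := by
  induction l generalizing h with
  | nil => rfl
  | cons A R ih => simp [apps_cons, List.map_cons, ih, subst]

/-! congruences for EqvGen -/

lemma eqv_appL {a a' : Lam} (b : Lam) (h : BetaEtaEq a a') :
    BetaEtaEq (app a b) (app a' b) := by
  induction h with
  | rel x y h => exact Relation.EqvGen.rel _ _ (Step.appL b h)
  | refl x => exact Relation.EqvGen.refl _
  | symm x y _ ih => exact Relation.EqvGen.symm _ _ ih
  | trans x y z _ _ ih1 ih2 => exact Relation.EqvGen.trans _ _ _ ih1 ih2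

lemma eqv_appR (a : Lam) {b b' : Lam} (h : BetaEtaEq b b') :
    BetaEtaEq (app a b) (app a b') := by
  induction h with
  | rel x y h => exact Relation.EqvGen.rel _ _ (Step.appR a h)
  | refl x => exact Relation.EqvGen.refl _
  | symm x y _ ih => exact Relation.EqvGen.symm _ _ ih
  | trans x y z _ _ ih1 ih2 => exact Relation.EqvGen.trans _ _ _ ih1 ih2

lemma eqv_app {a a' b b' : Lam} (h1 : BetaEtaEq a a') (h2 : BetaEtaEq b b') :
    BetaEtaEq (app a b) (app a' b') :=
  Relation.EqvGen.trans _ _ _ (eqv_appL b h1) (eqv_appR a' h2)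

lemma eqv_lam {a a' : Lam} (h : BetaEtaEq a a') : BetaEtaEq (lam a) (lam a') := by
  induction h with
  | rel x y h => exact Relation.EqvGen.rel _ _ (Step.xi h)
  | refl x => exact Relation.EqvGen.refl _
  | symm x y _ ih => exact Relation.EqvGen.symm _ _ ih
  | trans x y z _ _ ih1 ih2 => exact Relation.EqvGen.trans _ _ _ ih1 ih2

lemma eqv_apps {a a' : Lam} (R : List Lam) (h : BetaEtaEq a a') :
    BetaEtaEq (apps a R) (apps a' R) := by
  induction R generalizing a a' with
  | nil => exact h
  | cons A R ih => exact ih (eqv_appL A h)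

/-! lift / subst lemmas -/

lemma lift_lift (t : Lam) : ∀ c c', c ≤ c' → lift c (lift c' t) = lift (c'+1) (lift c t) := by
  induction t with
  | var n =>
    intro c c' h
    simp only [lift]
    split_ifs <;> simp only [lift] <;> split_ifs
    all_goals first | rfl | (congr 1; omega) | (exfalso; omega)
  | app a b iha ihb => intro c c' h; simp [lift, iha _ _ h, ihb _ _ h]
  | lam a ih => intro c c' h; simp [lift, ih (c+1) (c'+1) (by omega)]

lemma liftN_lift0 (j : ℕ) (t : Lam) : liftN j (lift 0 t) = lift 0 (liftN j t) := by
  induction j with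
  | zero => rfl
  | succ j ih => simp [liftN, ih]

lemma lift_liftN (d : ℕ) (A : Lam) : lift d (liftN d A) = liftN (d+1) A := by
  induction d with
  | zero => rfl
  | succ d ih =>
    show lift (d+1) (lift 0 (liftN d A)) = lift 0 (liftN (d+1) A)
    rw [← lift_lift (liftN d A) 0 d (by omega), ih]

lemma subst_lift (t : Lam) : ∀ d E, subst d E (lift d t) = t := by
  induction t with
  | var n =>
    intro d E
    simp only [lift]
    split_ifs <;> simp only [subst] <;> split_ifs
    all_goals first | rfl | (congr 1; omega) | (exfalso; omega)
  | app a b iha ihb => intro d E; simp [lift, subst, iha, ihb]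
  | lam a ih => intro d E; simp [lift, subst, ih]

lemma subst_liftN (d : ℕ) (E A : Lam) : subst d E (liftN (d+1) A) = liftN d A := by
  rw [← lift_liftN, subst_lift]

lemma subst_lams (j : ℕ) (X : Lam) : ∀ d E, subst d E (lams j X) = lams j (subst (d+j) (liftN j E) X) := by
  induction j with
  | zero => intro d E; simp [lams, liftN]
  | succ j ih =>
    intro d E
    show lam (subst (d+1) (lift 0 E) (lams j X)) = lam (lams j (subst (d+(j+1)) (liftN (j+1) E) X))
    rw [ih, liftN_lift0]
    have hd : d + 1 + j = d + (j+1) := by omega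
    rw [hd]
    rfl

/-! closedness -/

lemma lift_cu (X : Lam) : ∀ c c', cu c X → c ≤ c' → lift c' X = X := by
  induction X with
  | var n => intro c c' h hle; simp only [cu] at h; simp [lift]; omega
  | app a b iha ihb => intro c c' h hle; simp only [cu] at h
                       simp [lift, iha c c' h.1 hle, ihb c c' h.2 hle]
  | lam a ih => intro c c' h hle; simp only [cu] at h
                simp [lift, ih (c+1) (c'+1) h (by omega)]

lemma subst_cu (X : Lam) : ∀ c d E, cu c X → c ≤ d → subst d E X = X := by
  induction X with
  | var n => intro c d E h hle; simp only [cu] at h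
             simp only [subst]; split
             · omega
             · split
               · omega
               · rfl
  | app a b iha ihb => intro c d E h hle; simp only [cu] at h
                       simp [subst, iha c d _ h.1 hle, ihb c d _ h.2 hle]
  | lam a ih => intro c d E h hle; simp only [cu] at h
                simp [subst, ih (c+1) (d+1) _ h (by omega)]

lemma liftN_cu0 (j : ℕ) (X : Lam) (h : cu 0 X) : liftN j X = X := by
  induction j with
  | zero => rfl
  | succ j ih => simp [liftN, ih, lift_cu X 0 0 h (le_refl 0)]

end Lam

/-! ### tree-level machinery -/

def sizeSum (L : List BTree) : ℕ := (L.map BTree.size).sum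

@[simp] lemma sizeSum_nil : sizeSum [] = 0 := rfl
@[simp] lemma sizeSum_cons (u : BTree) (L : List BTree) : sizeSum (u :: L) = u.size + sizeSum L := by
  simp [sizeSum]
lemma sizeSum_append (L1 L2 : List BTree) : sizeSum (L1 ++ L2) = sizeSum L1 + sizeSum L2 := by
  simp [sizeSum]

lemma BTree.size_pos (t : BTree) : 1 ≤ t.size := by
  induction t with
  | leaf => simp [BTree.size]
  | node a b iha ihb => simp [BTree.size]; omega

def fill : BTree → List Lam → Lam
  | .leaf, l => l.headI
  | .node a b, l => .app (fill a (l.take a.size)) (fill b (l.drop a.size))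

def varsDesc : ℕ → List Lam
  | 0 => []
  | n+1 => .var n :: varsDesc n

@[simp] lemma varsDesc_length (n : ℕ) : (varsDesc n).length = n := by
  induction n with
  | zero => rfl
  | succ n ih => simp [varsDesc, ih]

lemma varsDesc_drop (o : ℕ) : ∀ n, o ≤ n → (varsDesc n).drop o = varsDesc (n - o) := by
  induction o with
  | zero => intro n _; simp
  | succ o ih =>
    intro n h
    cases n with
    | zero => omega
    | succ n =>
      show (varsDesc n).drop o = varsDesc (n+1-(o+1))
      rw [ih n (by omega)]
      congr 1
      omega

def graft : BTree → List BTree → BTree × List BTree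
  | .leaf, [] => (.leaf, [])
  | .leaf, u :: L => (u, L)
  | .node a b, L =>
      let p := graft a L
      let q := graft b p.2
      (.node p.1 q.1, q.2)

lemma graft_snd (s : BTree) : ∀ L, (graft s L).2 = L.drop s.size := by
  induction s with
  | leaf => intro L; cases L <;> simp [graft, BTree.size]
  | node a b iha ihb =>
    intro L
    show (graft b (graft a L).2).2 = _
    rw [ihb, iha, List.drop_drop, BTree.size_node]

lemma graft_fst_take (s : BTree) : ∀ L, (graft s L).1 = (graft s (L.take s.size)).1 := by
  induction s with
  | leaf => intro L; cases L <;> simp [graft, BTree.size]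
  | node a b iha ihb =>
    intro L
    show BTree.node (graft a L).1 (graft b (graft a L).2).1 =
      BTree.node (graft a (L.take (BTree.node a b).size)).1
        (graft b (graft a (L.take (BTree.node a b).size)).2).1
    rw [graft_snd, graft_snd]
    have e1 : (graft a (L.take (BTree.node a b).size)).1 = (graft a L).1 := by
      rw [iha L, iha (L.take (BTree.node a b).size), List.take_take,
        min_eq_left (show a.size ≤ (BTree.node a b).size by simp only [BTree.size_node]; omega)]
    have e2 : (L.take (BTree.node a b).size).drop a.size = (L.drop a.size).take b.size := by
      rw [List.drop_take]
      congr 1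
      simp only [BTree.size_node]
      omega
    have e3 : (graft b ((L.drop a.size).take b.size)).1 = (graft b (L.drop a.size)).1 :=
      (ihb (L.drop a.size)).symm
    rw [e1, e2, e3]

lemma graft_size (s : BTree) : ∀ L, L.length ≤ s.size →
    (graft s L).1.size = sizeSum (L.take s.size) + (s.size - L.length) := by
  induction s with
  | leaf =>
    intro L h
    cases L with
    | nil => simp [graft, BTree.size]
    | cons u L' =>
      cases L' with
      | nil => simp [graft, BTree.size]
      | cons v L'' => simp [BTree.size] at h
  | node a b iha ihb =>
    intro L h
    have hsplit : L.take (BTree.node a b).size = L.take a.size ++ (L.drop a.size).take b.size := by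
      show L.take (a.size + b.size) = _
      rw [List.take_add]
    show ((graft a L).1.size + (graft b (graft a L).2).1.size) = _
    rw [graft_snd a L]
    rcases le_or_gt L.length a.size with hle | hlt
    · have h1 : L.take a.size = L := List.take_of_length_le hle
      have h2 : L.drop a.size = [] := List.drop_eq_nil_of_le hle
      rw [iha L hle, h2, hsplit, h1, h2]
      have := ihb [] (by simp [b.size_pos])
      simp only [List.take_nil, List.length_nil] at this ⊢
      rw [this]
      simp only [BTree.size, sizeSum_append, sizeSum_nil]
      simp only [BTree.size] at h
      omega
    · have h3 : (graft a L).1.size = sizeSum (L.take a.size) := by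
        rw [graft_fst_take a L, iha (L.take a.size) (by simp)]
        simp [List.take_take, List.length_take]
        omega
      have h4 : (L.drop a.size).length ≤ b.size := by
        simp only [List.length_drop]
        simp only [BTree.size] at h
        omega
      rw [h3, ihb _ h4, hsplit]
      simp only [BTree.size, sizeSum_append, List.length_drop]
      simp only [BTree.size] at h
      omega

def pieces : BTree → List BTree → List Lam → List Lam
  | .leaf, [], ls => [ls.headI]
  | .leaf, u :: _, ls => [fill u ls]
  | .node a b, L, ls => pieces a L ls ++ pieces b (graft a L).2 (ls.drop (graft a L).1.size)

lemma pieces_length (s : BTree) : ∀ L ls, (pieces s L ls).length = s.size := by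
  induction s with
  | leaf => intro L ls; cases L <;> simp [pieces, BTree.size]
  | node a b iha ihb => intro L ls; simp [pieces, BTree.size, iha, ihb]

lemma fill_take (s : BTree) : ∀ l, fill s (l.take s.size) = fill s l := by
  induction s with
  | leaf =>
    intro l
    cases l <;> simp [fill, BTree.size, List.take]
  | node a b iha ihb =>
    intro l
    show Lam.app (fill a ((l.take _).take a.size)) (fill b ((l.take _).drop a.size)) =
      Lam.app (fill a (l.take a.size)) (fill b (l.drop a.size))
    rw [List.take_take, List.drop_take]
    congr 1
    · congr 1
      simp [BTree.size]
    · rw [← ihb (l.drop a.size)]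
      congr 1
      simp [BTree.size]

lemma fill_graft (s : BTree) : ∀ L ls, fill (graft s L).1 ls = fill s (pieces s L ls) := by
  induction s with
  | leaf => intro L ls; cases L <;> simp [graft, pieces, fill]
  | node a b iha ihb =>
    intro L ls
    show fill (BTree.node (graft a L).1 (graft b (graft a L).2).1) ls = _
    have hlen : (pieces a L ls).length = a.size := pieces_length a L ls
    show Lam.app (fill (graft a L).1 (ls.take (graft a L).1.size))
        (fill (graft b (graft a L).2).1 (ls.drop (graft a L).1.size)) =
      Lam.app (fill a ((pieces a L ls ++ _).take a.size)) (fill b ((pieces a L ls ++ _).drop a.size))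
    rw [List.take_left' hlen, List.drop_left' hlen, fill_take, iha, ihb]

def fillsL : List BTree → List Lam → List Lam
  | [], _ => []
  | u :: L, ls => fill u ls :: fillsL L (ls.drop u.size)

lemma fillsL_append (L1 L2 : List BTree) : ∀ ls,
    fillsL (L1 ++ L2) ls = fillsL L1 ls ++ fillsL L2 (ls.drop (sizeSum L1)) := by
  induction L1 with
  | nil => intro ls; simp [fillsL]
  | cons u L ih =>
    intro ls
    simp only [List.cons_append, fillsL, ih, sizeSum_cons, List.drop_drop, List.cons_append,
      List.append_eq]

lemma pieces_eq (s : BTree) : ∀ L ls, (graft s L).1.size ≤ ls.length →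
    pieces s L ls = fillsL (L.take s.size) ls ++
      ((ls.drop (sizeSum (L.take s.size))).take (s.size - L.length)) := by
  induction s with
  | leaf =>
    intro L ls h
    cases L with
    | nil =>
      simp only [graft, BTree.size] at h ⊢
      simp only [pieces, List.take_nil, fillsL, List.nil_append, List.drop_zero, sizeSum_nil,
        List.length_nil, Nat.sub_zero]
      cases ls with
      | nil => simp at h
      | cons x xs => simp [List.headI, List.take]
    | cons u L' =>
      simp [pieces, BTree.size, fillsL, List.take]
  | node a b iha ihb =>
    intro L ls h
    have hga : (graft (BTree.node a b) L).1.size = (graft a L).1.size + (graft b (L.drop a.size)).1.size := by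
      show (BTree.node (graft a L).1 (graft b (graft a L).2).1).size = _
      rw [graft_snd a L]; rfl
    have hsplit : L.take (BTree.node a b).size = L.take a.size ++ (L.drop a.size).take b.size := by
      show L.take (a.size + b.size) = _
      rw [List.take_add]
    show pieces a L ls ++ pieces b (graft a L).2 (ls.drop (graft a L).1.size) = _
    rw [graft_snd a L]
    rw [iha L ls (by omega)]
    rw [ihb (L.drop a.size) (ls.drop (graft a L).1.size) (by simp only [List.length_drop]; omega)]
    rw [hsplit, fillsL_append, sizeSum_append]
    rcases le_or_gt L.length a.size with hle | hlt
    · have h2 : L.drop a.size = [] := List.drop_eq_nil_of_le hle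
      have hga2 : (graft a L).1.size = sizeSum (L.take a.size) + (a.size - L.length) :=
        graft_size a L hle
      rw [h2]
      simp only [List.take_nil, fillsL, List.append_nil, sizeSum_nil, Nat.add_zero,
        List.drop_zero, List.length_nil, Nat.sub_zero, List.length_drop]
      rw [List.append_assoc]
      congr 1
      have : (BTree.node a b).size - L.length = (a.size - L.length) + b.size := by
        show a.size + b.size - L.length = _
        omega
      rw [this, List.take_add]
      congr 1
      rw [List.drop_drop, hga2]
      simp
    · have h3 : (graft a L).1.size = sizeSum (L.take a.size) := by
        rw [graft_fst_take a L, graft_size a (L.take a.size) (by simp)]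
        simp [List.take_take, List.length_take]
        omega
      have h5 : a.size - L.length = 0 := by omega
      rw [h5]
      simp only [List.take_zero, List.append_nil, List.length_drop]
      rw [List.append_assoc]
      congr 1
      rw [h3, List.drop_drop]
      have e4 : b.size - (L.length - a.size) = (BTree.node a b).size - L.length := by
        simp only [BTree.size_node]; omega
      rw [e4]

/-! ### fill and toLam -/

lemma fill_map (f : Lam → Lam) (hf : ∀ x y, f (Lam.app x y) = Lam.app (f x) (f y)) :
    ∀ (s : BTree) (l : List Lam), s.size ≤ l.length → f (fill s l) = fill s (l.map f) := by
  intro s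
  induction s with
  | leaf =>
    intro l h
    cases l with
    | nil => simp at h
    | cons x xs => simp [fill, List.headI]
  | node a b iha ihb =>
    intro l h
    simp only [BTree.size_node] at h
    show f (Lam.app (fill a (l.take a.size)) (fill b (l.drop a.size))) = _
    rw [hf, iha (l.take a.size) (by simp; omega), ihb (l.drop a.size) (by simp; omega),
      List.map_take, List.map_drop]
    rfl

lemma subst_fill (d : ℕ) (E : Lam) (s : BTree) (l : List Lam) (h : s.size ≤ l.length) :
    Lam.subst d E (fill s l) = fill s (l.map (Lam.subst d E)) :=
  fill_map (Lam.subst d E) (fun _ _ => rfl) s l h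

lemma fill_varsDesc : ∀ (r : BTree) (K o : ℕ), o + r.size ≤ K →
    fill r ((varsDesc K).drop o) = r.toLam K o := by
  intro r
  induction r with
  | leaf =>
    intro K o h
    simp only [BTree.size_leaf] at h
    rw [varsDesc_drop o K (by omega)]
    show (varsDesc (K - o)).headI = Lam.var (K - 1 - o)
    have hKo : K - o = (K - o - 1) + 1 := by omega
    rw [hKo]
    show Lam.var (K - o - 1) = Lam.var (K - 1 - o)
    congr 1
    omega
  | node a b iha ihb =>
    intro K o h
    simp only [BTree.size_node] at h
    show Lam.app (fill a (((varsDesc K).drop o).take a.size))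
        (fill b (((varsDesc K).drop o).drop a.size)) = _
    rw [fill_take, iha K o (by omega), List.drop_drop]
    have h2 : ∀ x : ℕ, x = o + a.size → fill b (List.drop x (varsDesc K)) = b.toLam K (o + a.size) := by
      intro x hx; rw [hx]; exact ihb K (o + a.size) (by omega)
    rw [h2 _ (by omega)]
    rfl

lemma liftN_var (j n : ℕ) : Lam.liftN j (Lam.var n) = Lam.var (n + j) := by
  induction j with
  | zero => rfl
  | succ j ih =>
    show Lam.lift 0 (Lam.liftN j (Lam.var n)) = _
    rw [ih]
    show ite (n + j < 0) _ _ = _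
    simp only [if_neg (by omega : ¬ n + j < 0)]
    congr 1

lemma liftN_app (j : ℕ) (x y : Lam) :
    Lam.liftN j (Lam.app x y) = Lam.app (Lam.liftN j x) (Lam.liftN j y) := by
  induction j with
  | zero => rfl
  | succ j ih => show Lam.lift 0 _ = _; rw [ih]; rfl

lemma liftN_toLam : ∀ (r : BTree) (k i Δ : ℕ), i + r.size ≤ k →
    Lam.liftN Δ (r.toLam k i) = r.toLam (k + Δ) i := by
  intro r
  induction r with
  | leaf =>
    intro k i Δ h
    simp only [BTree.size_leaf] at h
    show Lam.liftN Δ (Lam.var (k - 1 - i)) = Lam.var (k + Δ - 1 - i)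
    rw [liftN_var]
    congr 1
    omega
  | node a b iha ihb =>
    intro k i Δ h
    simp only [BTree.size_node] at h
    show Lam.liftN Δ (Lam.app (a.toLam k i) (b.toLam k (i + a.size))) = _
    rw [liftN_app, iha k i Δ (by omega), ihb k (i + a.size) Δ (by omega)]
    rfl

lemma toLam_shift : ∀ (r : BTree) (K i : ℕ), 1 ≤ i → r.toLam (K + 1) i = r.toLam K (i - 1) := by
  intro r
  induction r with
  | leaf =>
    intro K i h
    show Lam.var (K + 1 - 1 - i) = Lam.var (K - 1 - (i - 1))
    congr 1
    omega
  | node a b iha ihb =>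
    intro K i h
    show Lam.app (a.toLam (K+1) i) (b.toLam (K+1) (i + a.size)) =
      Lam.app (a.toLam K (i-1)) (b.toLam K ((i-1) + a.size))
    rw [iha K i h, ihb K (i + a.size) (by omega)]
    congr 2
    omega

/-! ### spine -/

def spineList : BTree → List BTree
  | .leaf => []
  | .node l r => spineList l ++ [r]

def spineArgs (k : ℕ) : BTree → List Lam
  | .leaf => []
  | .node l r => spineArgs k l ++ [r.toLam k l.size]

lemma spineArgs_length (k : ℕ) : ∀ t, (spineArgs k t).length = (spineList t).length := by
  intro t
  induction t with
  | leaf => rfl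
  | node l r ih => simp [spineArgs, spineList, ih]

lemma sizeSum_spineList : ∀ t : BTree, sizeSum (spineList t) = t.size - 1 := by
  intro t
  induction t with
  | leaf => rfl
  | node l r ih =>
    simp only [spineList, sizeSum_append, ih, sizeSum_cons, sizeSum_nil, BTree.size_node]
    have := l.size_pos
    omega

lemma toLam_spine : ∀ (t : BTree) (k : ℕ), t.toLam k 0 = Lam.apps (Lam.var (k - 1)) (spineArgs k t) := by
  intro t
  induction t with
  | leaf => intro k; rfl
  | node l r ih =>
    intro k
    show Lam.app (l.toLam k 0) (r.toLam k (0 + l.size)) = _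
    rw [Nat.zero_add, ih, spineArgs, Lam.apps_append]
    rfl

lemma cu_toLam' : ∀ (r : BTree) (k i : ℕ), 1 ≤ i → 2 ≤ k → Lam.cu (k - 1) (r.toLam k i) := by
  intro r
  induction r with
  | leaf =>
    intro k i h1 h2
    show k - 1 - i < k - 1
    omega
  | node a b iha ihb =>
    intro k i h1 h2
    exact ⟨iha k i h1 h2, ihb k (i + a.size) (by omega) h2⟩

lemma spineArgs_cu : ∀ (t : BTree) (k : ℕ), 2 ≤ k → ∀ A ∈ spineArgs k t, Lam.cu (k - 1) A := by
  intro t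
  induction t with
  | leaf => intro k _ A hA; simp [spineArgs] at hA
  | node l r ih =>
    intro k hk A hA
    simp only [spineArgs, List.mem_append, List.mem_singleton] at hA
    rcases hA with h | h
    · exact ih k hk A h
    · rw [h]; exact cu_toLam' r k l.size l.size_pos hk

lemma cu_toLam : ∀ (s : BTree) (m i : ℕ), i + s.size ≤ m → Lam.cu m (s.toLam m i) := by
  intro s
  induction s with
  | leaf =>
    intro m i h
    show m - 1 - i < m
    simp only [BTree.size_leaf] at h
    omega
  | node a b iha ihb =>
    intro m i h
    simp only [BTree.size_node] at h
    exact ⟨iha m i (by omega), ihb m (i + a.size) (by omega)⟩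

/-! ### lams -/

lemma lams_lams : ∀ (a b : ℕ) (X : Lam), lams a (lams b X) = lams (a + b) X := by
  intro a
  induction a with
  | zero => intro b X; simp [lams]
  | succ a ih =>
    intro b X
    show Lam.lam (lams a (lams b X)) = lams (a + 1 + b) X
    rw [ih]
    have : a + 1 + b = (a + b) + 1 := by omega
    rw [this]
    rfl

lemma eqv_lams : ∀ (j : ℕ) {a a' : Lam}, BetaEtaEq a a' → BetaEtaEq (lams j a) (lams j a') := by
  intro j
  induction j with
  | zero => intro a a' h; exact h
  | succ j ih => intro a a' h; exact Lam.eqv_lam (ih h)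

lemma cu_lams : ∀ (j c : ℕ) (X : Lam), Lam.cu (c + j) X → Lam.cu c (lams j X) := by
  intro j
  induction j with
  | zero => intro c X h; exact h
  | succ j ih =>
    intro c X h
    show Lam.cu (c + 1) (lams j X)
    exact ih (c+1) X (by rw [(by omega : c + 1 + j = c + (j + 1))]; exact h)

/-! ### iterated beta reduction -/

def substsL : ℕ → List Lam → Lam → Lam
  | _, [], X => X
  | 0, _ :: _, X => X
  | n+1, A :: R, X => substsL n R (Lam.subst n (Lam.liftN n A) X)

def listSubsts : ℕ → List Lam → List Lam → List Lam
  | _, [], l => l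
  | 0, _ :: _, l => l
  | n+1, A :: R, l => listSubsts n R (l.map (Lam.subst n (Lam.liftN n A)))

@[simp] lemma substsL_nil (n : ℕ) (X : Lam) : substsL n [] X = X := by cases n <;> rfl
@[simp] lemma substsL_succ (n : ℕ) (A : Lam) (R : List Lam) (X : Lam) :
    substsL (n+1) (A :: R) X = substsL n R (Lam.subst n (Lam.liftN n A) X) := rfl
@[simp] lemma listSubsts_nil (n : ℕ) (l : List Lam) : listSubsts n [] l = l := by cases n <;> rfl
@[simp] lemma listSubsts_succ (n : ℕ) (A : Lam) (R : List Lam) (l : List Lam) :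
    listSubsts (n+1) (A :: R) l = listSubsts n R (l.map (Lam.subst n (Lam.liftN n A))) := rfl

lemma substsL_one (n : ℕ) (hn : 1 ≤ n) (A X : Lam) :
    substsL n [A] X = Lam.subst (n-1) (Lam.liftN (n-1) A) X := by
  cases n with
  | zero => omega
  | succ n => simp

lemma beta_chain : ∀ (R : List Lam) (n : ℕ) (X : Lam), R.length ≤ n →
    BetaEtaEq (Lam.apps (lams n X) R) (lams (n - R.length) (substsL n R X)) := by
  intro R
  induction R with
  | nil =>
    intro n X _
    simp only [substsL_nil, List.length_nil, Nat.sub_zero]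
    exact Relation.EqvGen.refl _
  | cons A R ih =>
    intro n X h
    cases n with
    | zero => simp at h
    | succ n =>
      have step : Lam.Step (Lam.app (lams (n+1) X) A) (lams n (Lam.subst n (Lam.liftN n A) X)) := by
        have hb := Lam.Step.beta (lams n X) A
        rw [Lam.subst_lams] at hb
        rw [Nat.zero_add] at hb
        exact hb
      have h2 : n + 1 - (A :: R).length = n - R.length := by simp
      rw [h2]
      show BetaEtaEq (Lam.apps (Lam.app (lams (n+1) X) A) R) _
      exact Relation.EqvGen.trans _ _ _
        (Lam.eqv_apps R (Relation.EqvGen.rel _ _ step))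
        (ih n _ (by simp at h; omega))

lemma substsL_fill : ∀ (As : List Lam) (n : ℕ) (s : BTree) (l : List Lam), s.size ≤ l.length →
    substsL n As (fill s l) = fill s (listSubsts n As l) := by
  intro As
  induction As with
  | nil => intro n s l _; simp
  | cons A As ih =>
    intro n s l h
    cases n with
    | zero => rfl
    | succ n =>
      rw [substsL_succ, subst_fill _ _ s l h, ih n s _ (by simpa using h), listSubsts_succ]

lemma varsDesc_map_subst : ∀ (n d : ℕ) (E : Lam), n ≤ d →
    (varsDesc n).map (Lam.subst d E) = varsDesc n := by
  intro n
  induction n with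
  | zero => intro d E _; rfl
  | succ n ih =>
    intro d E h
    show (Lam.subst d E (Lam.var n)) :: (varsDesc n).map (Lam.subst d E) = _
    rw [ih d E (by omega)]
    congr 1
    show ite (n = d) _ _ = _
    rw [if_neg (by omega), if_neg (by omega)]

lemma listSubsts_varsDesc : ∀ (As : List Lam) (n : ℕ) (D : List Lam), As.length ≤ n →
    listSubsts n As (D.map (Lam.liftN n) ++ varsDesc n)
      = (D ++ As).map (Lam.liftN (n - As.length)) ++ varsDesc (n - As.length) := by
  intro As
  induction As with
  | nil => intro n D _; simp [Lam.liftN]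
  | cons A As ih =>
    intro n D h
    cases n with
    | zero => simp at h
    | succ n =>
      rw [listSubsts_succ]
      have e1 : (D.map (Lam.liftN (n+1))).map (Lam.subst n (Lam.liftN n A))
          = D.map (Lam.liftN n) := by
        rw [List.map_map]
        exact List.map_congr_left (fun d _ => Lam.subst_liftN n (Lam.liftN n A) d)
      have e2 : (varsDesc (n+1)).map (Lam.subst n (Lam.liftN n A))
          = Lam.liftN n A :: varsDesc n := by
        show (Lam.subst n (Lam.liftN n A) (Lam.var n)) :: _ = _
        rw [varsDesc_map_subst n n _ (le_refl n)]
        congr 1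
        show ite (n = n) _ _ = _
        rw [if_pos rfl]
      rw [List.map_append, e1, e2]
      have e3 : D.map (Lam.liftN n) ++ (Lam.liftN n A :: varsDesc n)
          = (D ++ [A]).map (Lam.liftN n) ++ varsDesc n := by
        simp
      rw [e3, ih n (D ++ [A]) (by simp at h ⊢; omega)]
      simp

/-! ### spine fill computation -/

lemma fillsL_spine : ∀ (t : BTree) (k K Δ : ℕ), K + 1 = k + Δ → 1 ≤ Δ → t.size ≤ k →
    fillsL (spineList t) (varsDesc K) = (spineArgs k t).map (Lam.liftN Δ) := by
  intro t
  induction t with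
  | leaf => intro k K Δ _ _ _; rfl
  | node l r ihl ihr =>
    intro k K Δ h1 h2 h3
    simp only [BTree.size_node] at h3
    show fillsL (spineList l ++ [r]) (varsDesc K) = _
    rw [fillsL_append, ihl k K Δ h1 h2 (by have := r.size_pos; omega), sizeSum_spineList]
    show _ ++ [fill r ((varsDesc K).drop (l.size - 1))] = _
    rw [fill_varsDesc r K (l.size - 1) (by have := l.size_pos; omega)]
    have e : r.toLam K (l.size - 1) = Lam.liftN Δ (r.toLam k l.size) := by
      rw [liftN_toLam r k l.size Δ (by omega)]
      have hK : k + Δ = K + 1 := h1.symm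
      rw [hK, toLam_shift r K l.size l.size_pos]
    rw [e]
    simp [spineArgs]

/-! ### eta expansion -/

lemma toLam_lift0 (s : BTree) (m i : ℕ) (h : i + s.size ≤ m) :
    Lam.lift 0 (s.toLam m i) = s.toLam (m + 1) i := by
  have := liftN_toLam s m i 1 h
  simpa [Lam.liftN] using this

lemma eta_exp (s : BTree) :
    BetaEtaEq (lams (s.size + 1) ((BTree.node s BTree.leaf).toLam (s.size + 1) 0))
      (lams s.size (s.toLam s.size 0)) := by
  have e1 : (BTree.node s BTree.leaf).toLam (s.size + 1) 0
      = Lam.app (Lam.lift 0 (s.toLam s.size 0)) (Lam.var 0) := by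
    show Lam.app (s.toLam (s.size+1) 0) (BTree.leaf.toLam (s.size+1) (0 + s.size)) = _
    rw [toLam_lift0 s s.size 0 (by omega)]
    congr 1
    show Lam.var (s.size + 1 - 1 - (0 + s.size)) = Lam.var 0
    congr 1
    omega
  rw [e1]
  have e2 : lams (s.size + 1) (Lam.app (Lam.lift 0 (s.toLam s.size 0)) (Lam.var 0))
      = lams s.size (Lam.lam (Lam.app (Lam.lift 0 (s.toLam s.size 0)) (Lam.var 0))) := by
    rw [← lams_lams s.size 1 (Lam.app (Lam.lift 0 (s.toLam s.size 0)) (Lam.var 0))]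
    rfl
  rw [e2]
  exact eqv_lams s.size (Relation.EqvGen.rel _ _ (Lam.Step.eta _))

def sExp : ℕ → BTree → BTree
  | 0, s => s
  | j+1, s => .node (sExp j s) .leaf

lemma sExp_size : ∀ (j : ℕ) (s : BTree), (sExp j s).size = s.size + j := by
  intro j
  induction j with
  | zero => intro s; rfl
  | succ j ih => intro s; show (sExp j s).size + 1 = _; rw [ih]; omega

lemma sExp_eqv : ∀ (j : ℕ) (s : BTree),
    BetaEtaEq (lams ((sExp j s).size) ((sExp j s).toLam ((sExp j s).size) 0))
      (lams s.size (s.toLam s.size 0)) := by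
  intro j
  induction j with
  | zero => intro s; exact Relation.EqvGen.refl _
  | succ j ih =>
    intro s
    have h2 := eta_exp (sExp j s)
    exact Relation.EqvGen.trans _ _ _ h2 (ih s)

/-! ### main application lemma -/

lemma app_canon (t s : BTree) (hk : 3 ≤ t.size) (hm : 3 ≤ s.size) :
    ∃ u : BTree, 3 ≤ u.size ∧
      BetaEtaEq (Lam.app (lams t.size (t.toLam t.size 0)) (lams s.size (s.toLam s.size 0)))
        (lams u.size (u.toLam u.size 0)) := by
  set k := t.size with hkdef
  set m := s.size with hmdef
  set p := (spineList t).length with hpdef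
  set s' := sExp p s with hs'def
  have hs'size : s'.size = m + p := sExp_size p s
  set E := lams s'.size (s'.toLam s'.size 0) with hEdef
  set As := spineArgs k t with hAsdef
  have hAslen : As.length = p := spineArgs_length k t
  set u := (graft s' (spineList t)).1 with hudef
  have hsum : sizeSum (spineList t) = k - 1 := sizeSum_spineList t
  have hK : u.size = (k - 1) + m := by
    rw [hudef, graft_size s' (spineList t) (by rw [hs'size]; omega),
        List.take_of_length_le (by rw [hs'size]; omega), hsum, hs'size]
    omega
  refine ⟨u, by omega, ?_⟩
  have hE : BetaEtaEq E (lams m (s.toLam m 0)) := sExp_eqv p s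
  have hEcu : Lam.cu 0 E := by
    apply cu_lams s'.size 0
    rw [Nat.zero_add]
    exact cu_toLam s' s'.size 0 (by omega)
  have step2 : BetaEtaEq (Lam.app (lams k (t.toLam k 0)) E)
      (lams (k - 1) (Lam.subst (k-1) E (t.toLam k 0))) := by
    have h := beta_chain [E] k (t.toLam k 0) (by simp; omega)
    rw [substsL_one k (by omega), Lam.liftN_cu0 _ _ hEcu] at h
    exact h
  have step3 : Lam.subst (k-1) E (t.toLam k 0) = Lam.apps E As := by
    rw [toLam_spine t k, Lam.subst_apps]
    congr 1
    · show ite (k - 1 = k - 1) _ _ = _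
      rw [if_pos rfl]
    · have hfix : ∀ A ∈ As, Lam.subst (k-1) E A = A := fun A hA =>
        Lam.subst_cu A (k-1) (k-1) E (spineArgs_cu t k (by omega) A hA) le_rfl
      calc As.map (Lam.subst (k-1) E) = As.map id := List.map_congr_left hfix
        _ = As := List.map_id As
  have harith : s'.size - As.length = m := by rw [hAslen, hs'size]; omega
  have hN : s'.toLam s'.size 0 = fill s' (varsDesc s'.size) := by
    have := fill_varsDesc s' s'.size 0 (by omega)
    simpa using this.symm
  have hsub : substsL s'.size As (s'.toLam s'.size 0)
      = fill s' (As.map (Lam.liftN m) ++ varsDesc m) := by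
    rw [hN, substsL_fill As s'.size s' (varsDesc s'.size) (by simp)]
    have hvd : varsDesc s'.size = (([] : List Lam)).map (Lam.liftN s'.size) ++ varsDesc s'.size := by
      simp
    rw [hvd, listSubsts_varsDesc As s'.size [] (by rw [hAslen, hs'size]; omega)]
    rw [harith]
    simp
  have step4 : BetaEtaEq (Lam.apps E As)
      (lams m (fill s' (As.map (Lam.liftN m) ++ varsDesc m))) := by
    have h := beta_chain As s'.size (s'.toLam s'.size 0) (by rw [hAslen, hs'size]; omega)
    rw [hsub, harith] at h
    exact h
  have step5 : fill s' (As.map (Lam.liftN m) ++ varsDesc m) = u.toLam u.size 0 := by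
    have h1 : u.toLam u.size 0 = fill u (varsDesc u.size) := by
      have := fill_varsDesc u u.size 0 (by omega)
      simpa using this.symm
    rw [h1, hudef, fill_graft s' (spineList t) (varsDesc u.size)]
    rw [pieces_eq s' (spineList t) (varsDesc u.size)
      (by rw [varsDesc_length, ← hudef])]
    rw [List.take_of_length_le (by rw [hs'size]; omega), hsum]
    rw [fillsL_spine t k u.size m (by omega) (by omega) le_rfl]
    rw [varsDesc_drop (k-1) u.size (by omega)]
    have h6 : u.size - (k - 1) = m := by omega
    have h7 : s'.size - (spineList t).length = m := by rw [hs'size, ← hpdef]; omega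
    rw [h6, h7, List.take_of_length_le (by simp)]
  apply Relation.EqvGen.trans _ _ _ (Lam.eqv_appR _ (Relation.EqvGen.symm _ _ hE))
  apply Relation.EqvGen.trans _ _ _ step2
  rw [step3]
  have h4 := eqv_lams (k-1) step4
  rw [lams_lams, step5, ← hK] at h4
  exact h4

/-- Every B-term is βη-equivalent to λx1.…λxk. M with k ≥ 3 where M is a
parenthesization of the sequence x1 x2 … xk (each variable occurring exactly once,
in order). -/
theorem stmt16 (e : Lam) (he : IsBTerm e) :
    ∃ t : BTree, 3 ≤ t.size ∧ BetaEtaEq e (lams t.size (t.toLam t.size 0)) := by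
  induction he with
  | base =>
    refine ⟨BTree.node BTree.leaf (BTree.node BTree.leaf BTree.leaf), by simp, ?_⟩
    exact Relation.EqvGen.refl _
  | app ha hb iha ihb =>
    obtain ⟨t, ht, h1⟩ := iha
    obtain ⟨s, hs, h2⟩ := ihb
    obtain ⟨u, hu, h3⟩ := app_canon t s ht hs
    exact ⟨u, hu, Relation.EqvGen.trans _ _ _ (Lam.eqv_app h1 h2) h3⟩
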